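/- Let A ∈ ℝ^{n×n} be column stochastic with nonnegative entries, and let φ ∈ ℝ^n have strictly positive entries and satisfy A φ = φ. Set D := n·diag(φ) and M := D^{-1}(Ā − A) = (1/2)·D^{-1}(I_n − A). Then M + M^T is positive semidefinite. -/

import Mathlib

/-!
`M + Mᵀ` is a positive multiple of `B + Bᵀ` with `B = diag(φ)⁻¹ (I - A)`, and `B + Bᵀ` has the
quadratic form `2 xᵀ B x`. Writing `y = x / φ`, the cross term is
`xᵀ diag(φ)⁻¹ A x = ∑ᵢⱼ Aᵢⱼ φⱼ yᵢ yⱼ ≤ ½ ∑ᵢⱼ Aᵢⱼ φⱼ (yᵢ² + yⱼ²)` by AM-GM; the first half collapses to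
`½ ∑ᵢ φᵢ yᵢ²` because `Aφ = φ`, the second to the same value because the columns of `A` sum to `1`.
Together they give `xᵀ diag(φ)⁻¹ A x ≤ ∑ᵢ φᵢ yᵢ² = xᵀ diag(φ)⁻¹ x`.
-/

open Matrix Finset

variable {ι : Type*} [Fintype ι]

lemma posSemidef_add_transpose_of_dotProduct_mulVec_nonneg {B : Matrix ι ι ℝ}
    (hB : ∀ x, 0 ≤ x ⬝ᵥ (B *ᵥ x)) : (B + Bᵀ).PosSemidef := by
  refine .of_dotProduct_mulVec_nonneg (by simp [IsHermitian, add_comm]) fun x => ?_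
  rw [star_trivial, add_mulVec, dotProduct_add, mulVec_transpose, dotProduct_comm x (x ᵥ* B),
    ← dotProduct_mulVec]
  linarith [hB x]

lemma inv_diagonal_of_ne_zero {K : Type*} [Field K] [DecidableEq ι] {d : ι → K}
    (hd : ∀ i, d i ≠ 0) : (diagonal d)⁻¹ = diagonal d⁻¹ := by
  refine inv_eq_right_inv ?_
  rw [diagonal_mul_diagonal, ← diagonal_one]
  exact congrArg diagonal (funext fun i => mul_inv_cancel₀ (hd i))

lemma two_mul_mul_le_mul_sq_add_sq_div {p : ℝ} (hp : 0 < p) (a b : ℝ) :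
    2 * a * b ≤ p * a ^ 2 + b ^ 2 / p := by
  have := div_nonneg (sq_nonneg (p * a - b)) hp.le
  rw [sub_sq, mul_pow] at this
  field_simp at this ⊢
  linarith

section Stochastic

variable {A : Matrix ι ι ℝ} {φ : ι → ℝ}

lemma sum_sum_mul_div_mul_le_sum_sq_div (hA0 : ∀ i j, 0 ≤ A i j) (hA1 : ∀ j, ∑ i, A i j = 1)
    (hφpos : ∀ i, 0 < φ i) (hφ : A *ᵥ φ = φ) (x : ι → ℝ) :
    ∑ i, ∑ j, A i j * (x i / φ i) * x j ≤ ∑ i, x i ^ 2 / φ i := by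
  have hrow : ∀ i, ∑ j, A i j * φ j = φ i := fun i => congrFun hφ i
  have hsq : ∀ i, (x i / φ i) ^ 2 * φ i = x i ^ 2 / φ i := fun i => by
    field_simp [(hφpos i).ne']
  suffices 2 * ∑ i, ∑ j, A i j * (x i / φ i) * x j ≤ 2 * ∑ i, x i ^ 2 / φ i by linarith
  calc 2 * ∑ i, ∑ j, A i j * (x i / φ i) * x j
      = ∑ i, ∑ j, A i j * (2 * (x i / φ i) * x j) := by
        simp only [mul_sum]
        exact sum_congr rfl fun i _ => sum_congr rfl fun j _ => by ring
    _ ≤ ∑ i, ∑ j, A i j * (φ j * (x i / φ i) ^ 2 + x j ^ 2 / φ j) := by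
        gcongr with i _ j _
        · exact hA0 i j
        · exact two_mul_mul_le_mul_sq_add_sq_div (hφpos j) _ _
    _ = ∑ i, (x i / φ i) ^ 2 * ∑ j, A i j * φ j + ∑ j, (∑ i, A i j) * (x j ^ 2 / φ j) := by
        simp only [mul_add, sum_add_distrib]
        congr 1
        · exact sum_congr rfl fun i _ => by
            rw [mul_sum]; exact sum_congr rfl fun j _ => by ring
        · rw [sum_comm]; simp only [sum_mul]
    _ = 2 * ∑ i, x i ^ 2 / φ i := by
        simp only [hrow, hA1, one_mul, hsq, two_mul]

lemma dotProduct_diagonal_inv_mul_one_sub_mulVec_nonneg [DecidableEq ι] (hA0 : ∀ i j, 0 ≤ A i j)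
    (hA1 : ∀ j, ∑ i, A i j = 1) (hφpos : ∀ i, 0 < φ i) (hφ : A *ᵥ φ = φ) (x : ι → ℝ) :
    0 ≤ x ⬝ᵥ ((diagonal φ⁻¹ * (1 - A)) *ᵥ x) := by
  have h := sum_sum_mul_div_mul_le_sum_sq_div hA0 hA1 hφpos hφ x
  have hexp : x ⬝ᵥ ((diagonal φ⁻¹ * (1 - A)) *ᵥ x)
      = ∑ i, x i ^ 2 / φ i - ∑ i, ∑ j, A i j * (x i / φ i) * x j := by
    rw [← mulVec_mulVec, sub_mulVec, one_mulVec]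
    simp only [dotProduct, mulVec_diagonal, Pi.sub_apply, Pi.inv_apply, mul_sub, sum_sub_distrib]
    congr 1
    · exact sum_congr rfl fun i _ => by ring
    · simp only [mulVec, dotProduct, mul_sum]
      exact sum_congr rfl fun i _ => sum_congr rfl fun j _ => by ring
  linarith

end Stochastic

theorem normalizedExtraPush_M_plus_Mt_posSemidef_general
    {n : ℕ}
    (A : Matrix (Fin n) (Fin n) ℝ)
    (hA0 : ∀ i j, 0 ≤ A i j) (hA1 : ∀ j, ∑ i, A i j = 1)
    (φ : Fin n → ℝ) (hφpos : ∀ i, 0 < φ i)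
    (hφ : A *ᵥ φ = φ)
    (D : Matrix (Fin n) (Fin n) ℝ) (hD : D = (n : ℝ) • Matrix.diagonal φ)
    (M : Matrix (Fin n) (Fin n) ℝ)
    (hM : M = (2⁻¹ : ℝ) • (D⁻¹ * (1 - A))) :
    (M + Mᵀ).PosSemidef := by
  have hDinv : D⁻¹ = (n : ℝ)⁻¹ • diagonal φ⁻¹ := by
    have hnφ : ∀ i, ((n : ℝ) • φ) i ≠ 0 := fun i =>
      mul_ne_zero (Nat.cast_ne_zero.mpr i.pos.ne') (hφpos i).ne'
    rw [hD, ← diagonal_smul, inv_diagonal_of_ne_zero hnφ, ← diagonal_smul]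
    exact congrArg diagonal (funext fun i => mul_inv _ _)
  have hMB : M + Mᵀ =
      (2⁻¹ * (n : ℝ)⁻¹) • (diagonal φ⁻¹ * (1 - A) + (diagonal φ⁻¹ * (1 - A))ᵀ) := by
    rw [hM, hDinv, smul_mul_assoc, smul_smul, transpose_smul, smul_add]
  rw [hMB]
  exact (posSemidef_add_transpose_of_dotProduct_mulVec_nonneg
    (dotProduct_diagonal_inv_mul_one_sub_mulVec_nonneg hA0 hA1 hφpos hφ)).smul (by positivity)

/-- if `A` is column stochastic with nonnegative entries and `φ > 0`
satisfies `A φ = φ`, then with `D := n diag(φ)` and `M := D⁻¹(Ā − A) = ½ D⁻¹(I − A)`,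
the matrix `M + Mᵀ` is positive semidefinite. -/
theorem normalizedExtraPush_M_plus_Mt_posSemidef
    {n : ℕ} (hn : 1 ≤ n)
    (A : Matrix (Fin n) (Fin n) ℝ)
    (hA0 : ∀ i j, 0 ≤ A i j) (hA1 : ∀ j, ∑ i, A i j = 1)
    (φ : Fin n → ℝ) (hφpos : ∀ i, 0 < φ i)
    (hφ : A *ᵥ φ = φ)
    (D : Matrix (Fin n) (Fin n) ℝ) (hD : D = (n : ℝ) • Matrix.diagonal φ)
    (M : Matrix (Fin n) (Fin n) ℝ)
    (hM : M = (2⁻¹ : ℝ) • (D⁻¹ * (1 - A))) :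
    (M + Mᵀ).PosSemidef :=
  normalizedExtraPush_M_plus_Mt_posSemidef_general A hA0 hA1 φ hφpos hφ D hD M hM
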